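/- arXiv:1112.3689 — 2 statements merged into one kernel-verified Lean document; each statement's English description precedes it below -/
import Mathlib

section
/- If 0 < a₁ < a₂ and β > 0, then the random variable Y_{a₂} = (1+X_{a₂})^{√a₂} stochastically dominates Y_{a₁} = (1+X_{a₁})^{√a₁}: for every y > 1, P(Y_{a₁} > y) < P(Y_{a₂} > y), where P(Y_a > y) = y^{√a} e^{−a(y^{1/√a}−1)}. -/
/-!
With `L = log y > 0` and `t = L / √a`, the tail is `exp (-L² ψ(t))` where
`ψ(t) = (exp t - 1 - t) / t²`. Since `ψ` is strictly increasing on `(0, ∞)` and `t` decreases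
as `a` grows, the tail strictly increases with `a`.
-/

open Real Set

lemma one_sub_mul_exp_lt_one {u : ℝ} (hu : u ≠ 0) : (1 - u) * exp u < 1 :=
  calc (1 - u) * exp u < exp (-u) * exp u := by
        gcongr
        linarith [add_one_lt_exp (neg_ne_zero.mpr hu)]
    _ = 1 := by rw [← exp_add, neg_add_cancel, exp_zero]

lemma two_mul_exp_lt {u : ℝ} (hu : 0 < u) : 2 * exp u < u * exp u + u + 2 := by
  have hmono : StrictMonoOn (fun u : ℝ => u * exp u - 2 * exp u + u) (Ici 0) := by
    refine strictMonoOn_of_deriv_pos (convex_Ici 0) (by fun_prop) fun x hx => ?_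
    rw [interior_Ici] at hx
    have hderiv : HasDerivAt (fun u : ℝ => u * exp u - 2 * exp u + u)
        (1 - (1 - x) * exp x) x := by
      refine ((((hasDerivAt_id x).mul (hasDerivAt_exp x)).sub
        ((hasDerivAt_exp x).const_mul 2)).add (hasDerivAt_id x)).congr_deriv ?_
      simp only [id_eq]
      ring
    rw [hderiv.deriv, sub_pos]
    exact one_sub_mul_exp_lt_one (ne_of_gt hx)
  have hlt := hmono self_mem_Ici hu.le hu
  simp only [mul_one, exp_zero] at hlt
  linarith

lemma strictMonoOn_exp_sub_one_sub_div_sq :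
    StrictMonoOn (fun t : ℝ => (exp t - 1 - t) / t ^ 2) (Ioi 0) := by
  refine strictMonoOn_of_deriv_pos (convex_Ioi 0) ?_ fun t ht => ?_
  · exact fun t ht => ((by fun_prop : Continuous fun t => exp t - 1 - t).continuousAt.div
      (continuousAt_pow t 2) (pow_ne_zero 2 (ne_of_gt ht))).continuousWithinAt
  replace ht : 0 < t := by rwa [interior_Ioi] at ht
  have hderiv : HasDerivAt (fun t : ℝ => (exp t - 1 - t) / t ^ 2)
      (t * (t * exp t + t + 2 - 2 * exp t) / (t ^ 2) ^ 2) t := by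
    refine ((((hasDerivAt_exp t).sub_const 1).sub (hasDerivAt_id t)).div
      (hasDerivAt_pow 2 t) (pow_ne_zero 2 ht.ne')).congr_deriv ?_
    simp only [Pi.sub_apply, id_eq]
    ring
  rw [hderiv.deriv]
  have hnum : 0 < t * exp t + t + 2 - 2 * exp t := by linarith [two_mul_exp_lt ht]
  positivity

lemma rpow_sqrt_mul_exp_eq {a y : ℝ} (ha : 0 < a) (hy₀ : 0 < y) (hy₁ : y ≠ 1) :
    y ^ √a * exp (-a * (y ^ (1 / √a) - 1)) =
      exp (-log y ^ 2 * ((exp (log y / √a) - 1 - log y / √a) / (log y / √a) ^ 2)) := by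
  have hL : log y ≠ 0 := log_ne_zero_of_pos_of_ne_one hy₀ hy₁
  have hs : √a ≠ 0 := (sqrt_pos.mpr ha).ne'
  rw [rpow_def_of_pos hy₀, rpow_def_of_pos hy₀, ← exp_add]
  congr 1
  field_simp
  linear_combination (exp (log y / √a) - 1) * sq_sqrt ha.le

theorem tail_stochastic_order (a₁ a₂ : ℝ) (h1 : 0 < a₁) (h12 : a₁ < a₂)
    (y : ℝ) (hy : 1 < y) :
    y ^ Real.sqrt a₁ * Real.exp (-a₁ * (y ^ (1 / Real.sqrt a₁) - 1)) <
      y ^ Real.sqrt a₂ * Real.exp (-a₂ * (y ^ (1 / Real.sqrt a₂) - 1)) := by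
  have hy₀ : 0 < y := zero_lt_one.trans hy
  have hL : 0 < log y := log_pos hy
  have hs₁ : 0 < √a₁ := sqrt_pos.mpr h1
  have hs₂ : 0 < √a₂ := sqrt_pos.mpr (h1.trans h12)
  rw [rpow_sqrt_mul_exp_eq h1 hy₀ hy.ne', rpow_sqrt_mul_exp_eq (h1.trans h12) hy₀ hy.ne',
    exp_lt_exp, neg_mul, neg_mul, neg_lt_neg_iff]
  refine mul_lt_mul_of_pos_left ?_ (by positivity)
  exact strictMonoOn_exp_sub_one_sub_div_sq (div_pos hL hs₂) (div_pos hL hs₁)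
    (div_lt_div_of_pos_left hL hs₁ (sqrt_lt_sqrt h1.le h12))
end

section
/- For fixed β > 0, the map a ↦ E[(1+X_a)^{β√a}] is strictly increasing on (0,∞), where X_a has density g(t,a) = a·t·e^{−a t}·(1+t)^{a−1} on (0,∞). -/
/-!
Write `h t = t - log (1 + t)`. Since `h' t = t / (1 + t)` and
`(1 + t) ^ a * e ^ (-a t) = e ^ (-a h t)`, the density is `g(t, a) dt = e ^ (-a h t) d(a h t)`:
`a h` is the cumulative hazard of `X_a`, and `a h(X_a)` is standard exponential. The substitution
`e = a h t` therefore gives `E[(1 + X_a) ^ (β √a)] = ∫₀^∞ (1 + h⁻¹(e / a)) ^ (β √a) e ^ (-e) de`.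
For fixed `e` put `t = h⁻¹(e / a)`, so that `a log (1 + t) ^ 2 = e · log (1 + t) ^ 2 / h t`.
The ratio `log (1 + t) ^ 2 / h t` is strictly decreasing (its derivative has the sign of
`2 t - (2 + t) log (1 + t) < 0`), and `t` decreases as `a` grows; hence `√a log (1 + t)`, and
with it the integrand, is strictly increasing in `a`.
-/

open Real Set MeasureTheory

lemma setIntegral_lt_setIntegral_of_forall_lt {X : Type*} [MeasurableSpace X] {μ : Measure X}
    {s : Set X} {f g : X → ℝ} (hs : MeasurableSet s) (hμs : μ s ≠ 0) (hf : IntegrableOn f s μ)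
    (hg : IntegrableOn g s μ) (hlt : ∀ x ∈ s, f x < g x) :
    ∫ x in s, f x ∂μ < ∫ x in s, g x ∂μ := by
  rw [← sub_pos, ← integral_sub hg hf,
    setIntegral_pos_iff_support_of_nonneg_ae (f := fun x => g x - f x) _ (hg.sub hf)]
  · have hsupp : s ⊆ Function.support fun x => g x - f x := fun x hx =>
      sub_ne_zero.2 (hlt x hx).ne'
    rwa [inter_eq_right.2 hsupp, pos_iff_ne_zero]
  · filter_upwards [ae_restrict_mem hs] with x hx
    exact sub_nonneg.2 (hlt x hx).le

lemma integrableOn_one_add_rpow_mul_exp_neg_mul {p a : ℝ} (ha : 0 < a) :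
    IntegrableOn (fun t => (1 + t) ^ p * exp (-a * t)) (Ioi 0) := by
  set q := max p 0
  have hq : 0 ≤ q := le_max_right p 0
  have hdom : IntegrableOn
      (fun t => 2 ^ q * (t ^ q * exp (-a * t ^ (1 : ℝ)) + exp (-a * t))) (Ioi 0) :=
    ((integrableOn_rpow_mul_exp_neg_mul_rpow (by linarith) one_pos ha).add
      (exp_neg_integrableOn_Ioi 0 ha)).const_mul _
  refine hdom.mono' (by fun_prop) ?_
  filter_upwards [ae_restrict_mem measurableSet_Ioi] with t (ht : 0 < t)
  have h2 : (1 + t) ^ q ≤ 2 ^ q * (t ^ q + 1) := by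
    rcases le_total t 1 with h | h
    · calc (1 + t) ^ q ≤ 2 ^ q := rpow_le_rpow (by linarith) (by linarith) hq
        _ ≤ 2 ^ q * (t ^ q + 1) :=
          le_mul_of_one_le_right (by positivity) (by linarith [rpow_nonneg ht.le q])
    · calc (1 + t) ^ q ≤ (2 * t) ^ q := rpow_le_rpow (by linarith) (by linarith) hq
        _ = 2 ^ q * t ^ q := mul_rpow (by norm_num) ht.le
        _ ≤ 2 ^ q * (t ^ q + 1) := by gcongr; linarith
  rw [rpow_one, norm_of_nonneg (by positivity)]
  calc (1 + t) ^ p * exp (-a * t) ≤ (1 + t) ^ q * exp (-a * t) := by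
        gcongr
        exacts [by linarith, le_max_left p 0]
    _ ≤ 2 ^ q * (t ^ q + 1) * exp (-a * t) := by gcongr
    _ = 2 ^ q * (t ^ q * exp (-a * t) + exp (-a * t)) := by ring

noncomputable def cumHazard (t : ℝ) : ℝ := t - log (1 + t)

lemma cumHazard_zero : cumHazard 0 = 0 := by simp [cumHazard]

lemma cumHazard_pos {t : ℝ} (ht : 0 < t) : 0 < cumHazard t := by
  have := log_lt_sub_one_of_pos (by linarith : 0 < 1 + t) (by linarith)
  rw [cumHazard]
  linarith

lemma hasDerivAt_cumHazard {t : ℝ} (ht : 1 + t ≠ 0) : HasDerivAt cumHazard (t / (1 + t)) t := by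
  refine ((hasDerivAt_id' t).sub (((hasDerivAt_id' t).const_add 1).log ht)).congr_deriv ?_
  field_simp
  ring

lemma strictMonoOn_cumHazard : StrictMonoOn cumHazard (Ici 0) := by
  refine strictMonoOn_of_deriv_pos (convex_Ici 0)
    (fun t ht =>
      (hasDerivAt_cumHazard (by linarith [mem_Ici.1 ht])).continuousAt.continuousWithinAt)
    fun t ht => ?_
  rw [interior_Ici, mem_Ioi] at ht
  rw [(hasDerivAt_cumHazard (by linarith)).deriv]
  positivity

lemma half_sub_one_le_cumHazard {t : ℝ} (ht : -1 < t) : t / 2 - 1 ≤ cumHazard t := by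
  have h := log_le_sub_one_of_pos (by linarith : 0 < (1 + t) / 2)
  rw [log_div (by linarith) two_ne_zero] at h
  rw [cumHazard]
  linarith [log_two_lt_d9]

lemma surjOn_cumHazard : SurjOn cumHazard (Ioi 0) (Ioi 0) := by
  intro y (hy : 0 < y)
  have hT := half_sub_one_le_cumHazard (t := 2 * y + 4) (by linarith)
  have hcont : ContinuousOn cumHazard (Icc 0 (2 * y + 4)) := fun t ht =>
    (hasDerivAt_cumHazard (by linarith [ht.1])).continuousAt.continuousWithinAt
  obtain ⟨t, ht, rfl⟩ := intermediate_value_Ioo (by linarith) hcont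
    ⟨cumHazard_zero ▸ hy, by linarith⟩
  exact ⟨t, ht.1, rfl⟩

lemma strictAntiOn_log_one_add_sq_div_cumHazard :
    StrictAntiOn (fun t => log (1 + t) ^ 2 / cumHazard t) (Ioi 0) := by
  have hderiv : ∀ t ∈ Ioi (0 : ℝ), HasDerivAt (fun t => log (1 + t) ^ 2 / cumHazard t)
      ((2 * log (1 + t) * (1 / (1 + t)) * cumHazard t - log (1 + t) ^ 2 * (t / (1 + t)))
        / cumHazard t ^ 2) t := fun t (ht : 0 < t) => by
    have hlog := ((hasDerivAt_id' t).const_add 1).log (by linarith)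
    refine ((hlog.fun_pow 2).fun_div (hasDerivAt_cumHazard (by linarith))
      (cumHazard_pos ht).ne').congr_deriv ?_
    ring
  refine strictAntiOn_of_deriv_neg (convex_Ioi 0)
    (fun t ht => (hderiv t ht).continuousAt.continuousWithinAt) fun t ht => ?_
  rw [interior_Ioi, mem_Ioi] at ht
  rw [(hderiv t ht).deriv]
  have hlog := lt_log_one_add_of_pos ht
  rw [div_lt_iff₀ (by linarith)] at hlog
  have hnum : 2 * log (1 + t) * (1 / (1 + t)) * cumHazard t - log (1 + t) ^ 2 * (t / (1 + t))
      = log (1 + t) / (1 + t) * (2 * t - (t + 2) * log (1 + t)) := by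
    rw [cumHazard]; field_simp; ring
  rw [hnum]
  have hL := log_pos (by linarith : 1 < 1 + t)
  have hH := cumHazard_pos ht
  exact div_neg_of_neg_of_pos (mul_neg_of_pos_of_neg (by positivity) (by linarith)) (by positivity)

lemma sqrt_mul_log_one_add_lt {a b s t : ℝ} (ha : 0 < a) (hs : 0 < s) (hst : s < t)
    (heq : a * cumHazard t = b * cumHazard s) : √a * log (1 + t) < √b * log (1 + s) := by
  have ht : 0 < t := hs.trans hst
  have hbs : 0 < b * cumHazard s := heq ▸ mul_pos ha (cumHazard_pos ht)
  have hb : 0 < b := (pos_iff_pos_of_mul_pos hbs).2 (cumHazard_pos hs)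
  have hsq : a * log (1 + t) ^ 2 < b * log (1 + s) ^ 2 := by
    have hht := (cumHazard_pos ht).ne'
    have hhs := (cumHazard_pos hs).ne'
    calc a * log (1 + t) ^ 2 = a * cumHazard t * (log (1 + t) ^ 2 / cumHazard t) := by
          field_simp
      _ < b * cumHazard s * (log (1 + s) ^ 2 / cumHazard s) := by
          rw [heq]
          exact mul_lt_mul_of_pos_left (strictAntiOn_log_one_add_sq_div_cumHazard hs ht hst) hbs
      _ = b * log (1 + s) ^ 2 := by field_simp
  refine lt_of_pow_lt_pow_left₀ 2 (mul_nonneg (sqrt_nonneg b) (log_nonneg (by linarith))) ?_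
  rwa [mul_pow, mul_pow, sq_sqrt ha.le, sq_sqrt hb.le]

noncomputable def cumHazardInv : ℝ → ℝ := Function.invFunOn cumHazard (Ioi 0)

lemma cumHazardInv_pos {y : ℝ} (hy : 0 < y) : 0 < cumHazardInv y :=
  surjOn_cumHazard.mapsTo_invFunOn hy

lemma cumHazard_cumHazardInv {y : ℝ} (hy : 0 < y) : cumHazard (cumHazardInv y) = y :=
  surjOn_cumHazard.rightInvOn_invFunOn hy

lemma cumHazardInv_cumHazard {t : ℝ} (ht : 0 < t) : cumHazardInv (cumHazard t) = t :=
  (strictMonoOn_cumHazard.injOn.mono Ioi_subset_Ici_self).leftInvOn_invFunOn ht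

lemma one_add_cumHazardInv_rpow_lt {a b β e : ℝ} (ha : 0 < a) (hab : a < b) (hβ : 0 < β)
    (he : 0 < e) :
    (1 + cumHazardInv (e / a)) ^ (β * √a) < (1 + cumHazardInv (e / b)) ^ (β * √b) := by
  have hb : 0 < b := ha.trans hab
  have hea : 0 < e / a := div_pos he ha
  have heb : 0 < e / b := div_pos he hb
  have hs := cumHazardInv_pos heb
  have ht := cumHazardInv_pos hea
  have hst : cumHazardInv (e / b) < cumHazardInv (e / a) := by
    rw [← strictMonoOn_cumHazard.lt_iff_lt hs.le ht.le, cumHazard_cumHazardInv hea,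
      cumHazard_cumHazardInv heb]
    exact div_lt_div_of_pos_left he ha hab
  have hlog := sqrt_mul_log_one_add_lt ha hs hst (by
    rw [cumHazard_cumHazardInv hea, cumHazard_cumHazardInv heb, mul_div_cancel₀ _ ha.ne',
      mul_div_cancel₀ _ hb.ne'])
  rw [rpow_def_of_pos (by linarith), rpow_def_of_pos (by linarith), exp_lt_exp]
  nlinarith

noncomputable def densityX (a t : ℝ) : ℝ := a * t * exp (-a * t) * (1 + t) ^ (a - 1)

lemma integrableOn_rpow_mul_densityX {a : ℝ} (ha : 0 < a) (c : ℝ) :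
    IntegrableOn (fun t => (1 + t) ^ c * densityX a t) (Ioi 0) := by
  unfold densityX
  refine ((integrableOn_one_add_rpow_mul_exp_neg_mul (p := c + a) ha).const_mul a).mono'
    (by fun_prop) ?_
  filter_upwards [ae_restrict_mem measurableSet_Ioi] with t (ht : 0 < t)
  have h1 : 0 < 1 + t := by linarith
  have hsplit : (1 + t) ^ (c + a) = (1 + t) ^ c * (1 + t) ^ (a - 1) * (1 + t) := by
    rw [rpow_add h1, rpow_sub_one h1.ne']
    field_simp
  rw [norm_of_nonneg (by positivity), hsplit]
  calc (1 + t) ^ c * (a * t * exp (-a * t) * (1 + t) ^ (a - 1))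
      = a * ((1 + t) ^ c * (1 + t) ^ (a - 1) * t * exp (-a * t)) := by ring
    _ ≤ a * ((1 + t) ^ c * (1 + t) ^ (a - 1) * (1 + t) * exp (-a * t)) := by
        gcongr
        linarith

lemma rpow_mul_densityX_eq {a t : ℝ} (ha : 0 < a) (ht : 0 < t) (c : ℝ) :
    (1 + t) ^ c * densityX a t =
      |a * (t / (1 + t))| • ((1 + cumHazardInv (a * cumHazard t / a)) ^ c *
        exp (-(a * cumHazard t))) := by
  have h1 : 0 < 1 + t := by linarith
  have hexp : exp (-(a * cumHazard t)) = (1 + t) ^ a * exp (-a * t) := by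
    rw [rpow_def_of_pos h1, ← exp_add, cumHazard]
    ring_nf
  rw [densityX, mul_div_cancel_left₀ _ ha.ne', cumHazardInv_cumHazard ht,
    abs_of_pos (by positivity), smul_eq_mul, hexp, rpow_sub_one h1.ne']
  field_simp

lemma image_const_mul_cumHazard_Ioi {a : ℝ} (ha : 0 < a) :
    (fun t => a * cumHazard t) '' Ioi 0 = Ioi 0 := by
  rw [← image_image (a * ·) cumHazard,
    surjOn_cumHazard.image_eq_of_mapsTo fun _ ht => cumHazard_pos ht, image_const_mul_Ioi_zero ha]

lemma hasDerivWithinAt_const_mul_cumHazard (a : ℝ) {t : ℝ} (ht : 0 < t) :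
    HasDerivWithinAt (fun t => a * cumHazard t) (a * (t / (1 + t))) (Ioi 0) t :=
  ((hasDerivAt_cumHazard (by linarith)).const_mul a).hasDerivWithinAt

lemma injOn_const_mul_cumHazard {a : ℝ} (ha : a ≠ 0) :
    InjOn (fun t => a * cumHazard t) (Ioi 0) := fun _ hs _ ht hst =>
  (strictMonoOn_cumHazard.injOn.mono Ioi_subset_Ici_self) hs ht (mul_left_cancel₀ ha hst)

theorem integral_rpow_mul_densityX_eq {a : ℝ} (ha : 0 < a) (c : ℝ) :
    ∫ t in Ioi 0, (1 + t) ^ c * densityX a t =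
      ∫ e in Ioi 0, (1 + cumHazardInv (e / a)) ^ c * exp (-e) := by
  have h := integral_image_eq_integral_abs_deriv_smul measurableSet_Ioi
    (fun _ ht => hasDerivWithinAt_const_mul_cumHazard a ht) (injOn_const_mul_cumHazard ha.ne')
    fun e => (1 + cumHazardInv (e / a)) ^ c * exp (-e)
  rw [image_const_mul_cumHazard_Ioi ha] at h
  rw [h]
  exact setIntegral_congr_fun measurableSet_Ioi fun t ht => rpow_mul_densityX_eq ha ht c

theorem integrableOn_one_add_cumHazardInv_rpow_mul_exp_neg {a : ℝ} (ha : 0 < a) (c : ℝ) :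
    IntegrableOn (fun e => (1 + cumHazardInv (e / a)) ^ c * exp (-e)) (Ioi 0) := by
  have h := integrableOn_image_iff_integrableOn_abs_deriv_smul measurableSet_Ioi
    (fun _ ht => hasDerivWithinAt_const_mul_cumHazard a ht) (injOn_const_mul_cumHazard ha.ne')
    fun e => (1 + cumHazardInv (e / a)) ^ c * exp (-e)
  rw [image_const_mul_cumHazard_Ioi ha] at h
  exact h.2 ((integrableOn_rpow_mul_densityX ha c).congr_fun
    (fun t ht => rpow_mul_densityX_eq ha ht c) measurableSet_Ioi)

open MeasureTheory in
theorem moment_strictMono (β : ℝ) (hβ : 0 < β) :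
    StrictMonoOn
      (fun a : ℝ => ∫ t in Set.Ioi (0 : ℝ),
        (1 + t) ^ (β * Real.sqrt a) * (a * t * Real.exp (-a * t) * (1 + t) ^ (a - 1)))
      (Set.Ioi 0) := by
  intro a (ha : 0 < a) b (hb : 0 < b) hab
  show (∫ t in Ioi 0, (1 + t) ^ (β * √a) * densityX a t) <
    ∫ t in Ioi 0, (1 + t) ^ (β * √b) * densityX b t
  rw [integral_rpow_mul_densityX_eq ha, integral_rpow_mul_densityX_eq hb]
  exact setIntegral_lt_setIntegral_of_forall_lt measurableSet_Ioi (by simp)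
    (integrableOn_one_add_cumHazardInv_rpow_mul_exp_neg ha _)
    (integrableOn_one_add_cumHazardInv_rpow_mul_exp_neg hb _)
    fun e he => mul_lt_mul_of_pos_right (one_add_cumHazardInv_rpow_lt ha hab hβ he) (exp_pos _)
end
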